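/- Let 𝕏 and 𝕐 be self-aware filtered processes (i.e. L(X | 𝓕^𝕏_t) = L(X | X_{1:t}) for all t, and analogously for 𝕐). If (Ω̄, 𝓕̄, P̄, (𝓕̄_t), (X̄, Ȳ)) is any process on a common filtered basis with X̄ self-aware with respect to (𝓕̄_t) and Ȳ self-aware with respect to (𝓕̄_t), then the joint law π = L(X̄, Ȳ) is a bicausal coupling on path space: for every t, under π the coordinates satisfy Y_{1:t} ⫫ X | X_{1:t} and X_{1:t} ⫫ Y | Y_{1:t}. -/

import Mathlib

/-! Self-awareness of `X̄` gives `L(X̄ | ℱ̄_t) = L(X̄ | X̄_{1:t})`. Since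
`σ(X̄_{1:t}) ⊆ σ(X̄_{1:t}, Ȳ_{1:t}) ⊆ ℱ̄_t`, the tower property squeezes
`L(X̄ | X̄_{1:t}, Ȳ_{1:t}) = L(X̄ | X̄_{1:t})`, which is `Ȳ_{1:t} ⫫ X̄ | X̄_{1:t}` on `Ω̄`.
Conditional expectations commute with the pushforward along `(X̄, Ȳ)`, so this independence
holds for the coordinate processes under `π`; the other half is symmetric. -/

open MeasureTheory ProbabilityTheory

/-- The σ-algebra `σ(Y_{1:t})` generated by the process `Y` up to time `t`. -/
def pathSigma {Ω E : Type*} {N : ℕ} [MeasurableSpace E] (Y : Fin N → Ω → E) (t : Fin N) :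
    MeasurableSpace Ω :=
  ⨆ i : Fin N, ⨆ _ : i ≤ t, MeasurableSpace.comap (Y i) inferInstance

/-- A process `Y` adapted to a filtration `ℱ` is *self-aware* if the conditional law of the
whole path given `ℱ t` coincides with the conditional law given `Y_{1:t}`, for every `t`;
expressed via conditional expectations of indicators of path events. -/
def SelfAware {Ω E : Type*} {N : ℕ} [mΩ : MeasurableSpace Ω] [MeasurableSpace E]
    (μ : Measure Ω) (ℱ : Fin N → MeasurableSpace Ω) (Y : Fin N → Ω → E) : Prop :=
  ∀ t : Fin N, ∀ s : Set (Fin N → E), MeasurableSet s →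
    μ[Set.indicator ((fun ω i => Y i ω) ⁻¹' s) (fun _ => (1 : ℝ)) | ℱ t]
      =ᵐ[μ] μ[Set.indicator ((fun ω i => Y i ω) ⁻¹' s) (fun _ => (1 : ℝ)) | pathSigma Y t]

/-- Elementary conditional independence of two σ-algebras `mA, mB` given `mC` under `μ`:
`E[1_A 1_B | mC] = E[1_A | mC] · E[1_B | mC]` a.s. for all `A ∈ mA`, `B ∈ mB`. -/
def CondIndepC {Ω : Type*} [mΩ : MeasurableSpace Ω] (μ : Measure Ω)
    (mA mB mC : MeasurableSpace Ω) : Prop :=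
  ∀ A : Set Ω, MeasurableSet[mA] A → ∀ B : Set Ω, MeasurableSet[mB] B →
    μ[Set.indicator (A ∩ B) (fun _ => (1 : ℝ)) | mC]
      =ᵐ[μ] μ[Set.indicator A (fun _ => (1 : ℝ)) | mC] *
            μ[Set.indicator B (fun _ => (1 : ℝ)) | mC]

section CondExp

variable {α : Type*} {m₀ : MeasurableSpace α} {μ : Measure α} [IsFiniteMeasure μ]
  {E : Type*} [NormedAddCommGroup E] [NormedSpace ℝ E] [CompleteSpace E]

theorem condExp_ae_eq_of_le_of_le {m₁ m₂ m₃ : MeasurableSpace α} {f : α → E}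
    (h₁₂ : m₁ ≤ m₂) (h₂₃ : m₂ ≤ m₃) (h₃ : m₃ ≤ m₀) (h : μ[f|m₃] =ᵐ[μ] μ[f|m₁]) :
    μ[f|m₂] =ᵐ[μ] μ[f|m₁] :=
  calc μ[f|m₂] =ᵐ[μ] μ[μ[f|m₃]|m₂] := (condExp_condExp_of_le h₂₃ h₃).symm
    _ =ᵐ[μ] μ[μ[f|m₁]|m₂] := condExp_congr_ae h
    _ = μ[f|m₁] := condExp_of_stronglyMeasurable (h₂₃.trans h₃)
        (stronglyMeasurable_condExp.mono h₁₂) integrable_condExp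

theorem condExp_map_comp_ae_eq {β : Type*} {m mβ : MeasurableSpace β} {f : α → β}
    (hf : Measurable f) (hm : m ≤ mβ) {g : β → E}
    (hg : StronglyMeasurable g) (hgi : Integrable g (μ.map f)) :
    (μ.map f)[g|m] ∘ f =ᵐ[μ] μ[g ∘ f|m.comap f] := by
  have hce : StronglyMeasurable[m] ((μ.map f)[g|m]) := stronglyMeasurable_condExp
  have hce' : AEStronglyMeasurable ((μ.map f)[g|m]) (μ.map f) :=
    (hce.mono hm).aestronglyMeasurable
  refine ae_eq_condExp_of_forall_setIntegral_eq ((MeasurableSpace.comap_mono hm).trans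
    hf.comap_le) ((integrable_map_measure hg.aestronglyMeasurable hf.aemeasurable).mp hgi)
    (fun _ _ _ =>
      ((integrable_map_measure hce' hf.aemeasurable).mp integrable_condExp).integrableOn)
    ?_ (hce.comp_measurable (Measurable.of_comap_le le_rfl)).aestronglyMeasurable
  rintro _ ⟨u, hu, rfl⟩ -
  calc ∫ x in f ⁻¹' u, ((μ.map f)[g|m] ∘ f) x ∂μ
      = ∫ y in u, ((μ.map f)[g|m]) y ∂(μ.map f) :=
        (setIntegral_map (hm u hu) hce' hf.aemeasurable).symm
    _ = ∫ y in u, g y ∂(μ.map f) := setIntegral_condExp hm hgi hu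
    _ = ∫ x in f ⁻¹' u, (g ∘ f) x ∂μ :=
        setIntegral_map (hm u hu) hg.aestronglyMeasurable hf.aemeasurable

end CondExp

section CondIndep

variable {Ω : Type*}

theorem condIndepC_of_condExp_sup_ae_eq {mA mB mC mΩ : MeasurableSpace Ω} {μ : Measure Ω}
    [IsFiniteMeasure μ] (hA : mA ≤ mΩ) (hB : mB ≤ mΩ) (hC : mC ≤ mΩ)
    (h : ∀ B, MeasurableSet[mB] B →
      μ[B.indicator (fun _ => (1 : ℝ))|mC ⊔ mA] =ᵐ[μ] μ[B.indicator (fun _ => (1 : ℝ))|mC]) :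
    CondIndepC μ mA mB mC := by
  intro A hAm B hBm
  set fA := A.indicator (fun _ => (1 : ℝ))
  set fB := B.indicator (fun _ => (1 : ℝ))
  have hCA : mC ⊔ mA ≤ mΩ := sup_le hC hA
  have hind_le : ∀ (s : Set Ω) x, ‖s.indicator (fun _ => (1 : ℝ)) x‖ ≤ 1 := fun _ _ =>
    (norm_indicator_le_norm_self _ _).trans norm_one.le
  have hcondB_le : ∀ᵐ x ∂μ, ‖μ[fB|mC] x‖ ≤ 1 :=
    ae_bdd_norm_condExp_of_ae_bdd_norm (.of_forall (hind_le B))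
  have hfBi : Integrable fB μ := (integrable_const (1 : ℝ)).indicator (hB B hBm)
  rw [show (A ∩ B).indicator (fun _ => (1 : ℝ)) = fA * fB from Set.inter_indicator_one]
  calc μ[fA * fB|mC] =ᵐ[μ] μ[μ[fA * fB|mC ⊔ mA]|mC] :=
        (condExp_condExp_of_le le_sup_left hCA).symm
    _ =ᵐ[μ] μ[fA * μ[fB|mC]|mC] := condExp_congr_ae <|
        (condExp_stronglyMeasurable_mul_of_bound hCA
          ((stronglyMeasurable_const.indicator hAm).mono le_sup_right) hfBi 1
          (.of_forall (hind_le A))).trans (Filter.EventuallyEq.rfl.mul (h B hBm))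
    _ =ᵐ[μ] μ[fA|mC] * μ[fB|mC] := by
        rw [mul_comm fA, mul_comm (μ[fA|mC])]
        exact condExp_stronglyMeasurable_mul_of_bound hC stronglyMeasurable_condExp
          ((integrable_const (1 : ℝ)).indicator (hA A hAm)) 1 hcondB_le

theorem CondIndepC.map {mΩ : MeasurableSpace Ω} {μ : Measure Ω} [IsFiniteMeasure μ] {β : Type*}
    {mA mB mC mβ : MeasurableSpace β} {f : Ω → β} (hf : Measurable f) (hA : mA ≤ mβ)
    (hB : mB ≤ mβ) (hC : mC ≤ mβ)
    (h : CondIndepC μ (mA.comap f) (mB.comap f) (mC.comap f)) :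
    CondIndepC (μ.map f) mA mB mC := by
  intro A hAm B hBm
  have hind : ∀ {s}, MeasurableSet s →
      (μ.map f)[s.indicator (fun _ => (1 : ℝ))|mC] ∘ f
        =ᵐ[μ] μ[(f ⁻¹' s).indicator (fun _ => (1 : ℝ))|mC.comap f] := fun hs =>
    condExp_map_comp_ae_eq hf hC (stronglyMeasurable_const.indicator hs)
      ((integrable_const (1 : ℝ)).indicator hs)
  have hceC : ∀ g : β → ℝ, Measurable ((μ.map f)[g|mC]) := fun _ =>
    (stronglyMeasurable_condExp.mono hC).measurable
  refine (ae_map_iff hf.aemeasurable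
    (measurableSet_eq_fun (hceC _) ((hceC _).mul (hceC _)))).mpr ?_
  filter_upwards [hind ((hA A hAm).inter (hB B hBm)), hind (hA A hAm), hind (hB B hBm),
    h _ ⟨A, hAm, rfl⟩ _ ⟨B, hBm, rfl⟩] with ω hAB hA' hB' hω
  simp only [Function.comp_apply] at hAB hA' hB'
  rw [hAB, Pi.mul_apply, hA', hB', Set.preimage_inter]
  exact hω

end CondIndep

section PathSigma

variable {Ω E : Type*} [MeasurableSpace E] {N : ℕ}

theorem pathSigma_le {m : MeasurableSpace Ω} {Y : Fin N → Ω → E} {t : Fin N}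
    (hY : ∀ i ≤ t, Measurable[m] (Y i)) : pathSigma Y t ≤ m :=
  iSup₂_le fun i hi => (hY i hi).comap_le

theorem comap_pathSigma {β : Type*} (f : Ω → β) (Y : Fin N → β → E) (t : Fin N) :
    (pathSigma Y t).comap f = pathSigma (fun i => Y i ∘ f) t := by
  simp only [pathSigma, MeasurableSpace.comap_iSup, MeasurableSpace.comap_comp]

theorem SelfAware.condIndepC {m : MeasurableSpace Ω} [mΩ : MeasurableSpace Ω] {μ : Measure Ω}
    [IsFiniteMeasure μ]
    {ℱ : Fin N → MeasurableSpace Ω} {X : Fin N → Ω → E} (hsa : SelfAware μ ℱ X)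
    (hX : ∀ i, Measurable (X i)) {t : Fin N} (hℱ : ℱ t ≤ mΩ) (hXℱ : pathSigma X t ≤ ℱ t)
    (hm : m ≤ ℱ t) :
    CondIndepC μ m (MeasurableSpace.comap (fun ω i => X i ω) inferInstance) (pathSigma X t) := by
  refine condIndepC_of_condExp_sup_ae_eq (hm.trans hℱ) (measurable_pi_lambda _ hX).comap_le
    (hXℱ.trans hℱ) ?_
  rintro _ ⟨s, hs, rfl⟩
  exact condExp_ae_eq_of_le_of_le le_sup_left (sup_le hXℱ hm) hℱ (hsa t s hs)

end PathSigma

/-- If `X̄` and `Ȳ` are both self-aware with respect to a common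
filtration `(ℱ̄_t)` on `(Ω̄, P̄)`, then the joint law `π = L(X̄, Ȳ)` on path space is a
bicausal coupling: for every `t`, under `π` the coordinate processes satisfy
`Y_{1:t} ⫫ X | X_{1:t}` and `X_{1:t} ⫫ Y | Y_{1:t}`. -/
theorem stmt_19 {Ω E F : Type*} [mΩ : MeasurableSpace Ω] [MeasurableSpace E]
    [MeasurableSpace F] {N : ℕ}
    (P : Measure Ω) [IsProbabilityMeasure P]
    (ℱ : Fin N → MeasurableSpace Ω) (hmono : Monotone ℱ) (hle : ∀ t, ℱ t ≤ mΩ)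
    (X : Fin N → Ω → E) (Y : Fin N → Ω → F)
    (hX : ∀ t, Measurable[ℱ t] (X t)) (hY : ∀ t, Measurable[ℱ t] (Y t))
    (hsaX : SelfAware P ℱ X) (hsaY : SelfAware P ℱ Y) :
    ∀ t : Fin N,
      CondIndepC
        (Measure.map (fun ω => ((fun i : Fin N => X i ω), (fun i : Fin N => Y i ω))) P)
        (⨆ i : Fin N, ⨆ _ : i ≤ t,
          MeasurableSpace.comap (fun q : (Fin N → E) × (Fin N → F) => q.2 i) inferInstance)
        (MeasurableSpace.comap (Prod.fst : (Fin N → E) × (Fin N → F) → Fin N → E)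
          inferInstance)
        (⨆ i : Fin N, ⨆ _ : i ≤ t,
          MeasurableSpace.comap (fun q : (Fin N → E) × (Fin N → F) => q.1 i)
            inferInstance) ∧
      CondIndepC
        (Measure.map (fun ω => ((fun i : Fin N => X i ω), (fun i : Fin N => Y i ω))) P)
        (⨆ i : Fin N, ⨆ _ : i ≤ t,
          MeasurableSpace.comap (fun q : (Fin N → E) × (Fin N → F) => q.1 i) inferInstance)
        (MeasurableSpace.comap (Prod.snd : (Fin N → E) × (Fin N → F) → Fin N → F)
          inferInstance)
        (⨆ i : Fin N, ⨆ _ : i ≤ t,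
          MeasurableSpace.comap (fun q : (Fin N → E) × (Fin N → F) => q.2 i)
            inferInstance) := by
  intro t
  have hXm : ∀ i, Measurable (X i) := fun i => (hX i).mono (hle i) le_rfl
  have hYm : ∀ i, Measurable (Y i) := fun i => (hY i).mono (hle i) le_rfl
  have hΦ : Measurable fun ω => ((fun i : Fin N => X i ω), (fun i : Fin N => Y i ω)) :=
    (measurable_pi_lambda _ hXm).prodMk (measurable_pi_lambda _ hYm)
  have hXℱ : pathSigma X t ≤ ℱ t := pathSigma_le fun i hi => (hX i).mono (hmono hi) le_rfl
  have hYℱ : pathSigma Y t ≤ ℱ t := pathSigma_le fun i hi => (hY i).mono (hmono hi) le_rfl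
  have hfst : pathSigma (fun i (q : (Fin N → E) × (Fin N → F)) => q.1 i) t ≤
      Prod.instMeasurableSpace :=
    pathSigma_le fun i _ => (measurable_pi_apply i).comp measurable_fst
  have hsnd : pathSigma (fun i (q : (Fin N → E) × (Fin N → F)) => q.2 i) t ≤
      Prod.instMeasurableSpace :=
    pathSigma_le fun i _ => (measurable_pi_apply i).comp measurable_snd
  -- the σ-algebras of the statement are `pathSigma` of the coordinate processes, unfolded
  constructor
  · refine CondIndepC.map hΦ hsnd measurable_fst.comap_le hfst ?_
    erw [comap_pathSigma, comap_pathSigma, MeasurableSpace.comap_comp]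
    exact hsaX.condIndepC hXm (hle t) hXℱ hYℱ
  · refine CondIndepC.map hΦ hfst measurable_snd.comap_le hsnd ?_
    erw [comap_pathSigma, comap_pathSigma, MeasurableSpace.comap_comp]
    exact hsaY.condIndepC hYm (hle t) hYℱ hXℱ
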